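/- arXiv:2001.03842 — 3 statements merged into one kernel-verified Lean document; each statement's English description precedes it below -/
import Mathlib

section
/- Let ω : [0,∞) → [0,∞) be a strong modulus of continuity (continuous on [0,∞), C² on (0,∞), nondecreasing, concave, ω(0)=0, 0 < ω'(0) < ∞, and ω''(ξ) → −∞ as ξ → 0⁺). If θ ∈ C²(ℝ^d) satisfies |θ(x) − θ(y)| ≤ ω(|x−y|) for all x, y, and the supremum of |∇θ| is attained at some point, then sup_x |∇θ(x)| < ω'(0). -/
/-!
Suppose the maximum `M = ‖∇θ(x₀)‖` were at least `ω'(0) > 0`, and let `v` be the unit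
vector with `∇θ(x₀) · v = M`. The directional derivative `t ↦ ∇θ(x₀ + t v) · v` is
maximal at `t = 0`, so its derivative vanishes there and `θ(x₀ + t v) - θ(x₀) ≥ M t - t²`
for small `t > 0`. On the other hand `ω'' → -∞` at `0⁺` forces `ω(t) ≤ ω'(0) t - 2 t²`
for small `t > 0`, which contradicts `θ(x₀ + t v) - θ(x₀) ≤ ω(t)`.
-/

open Set Filter Topology

lemma eventually_le_of_tendsto_of_hasDerivAt_nonpos {h h' : ℝ → ℝ} {a L : ℝ}
    (hd : ∀ᶠ x in 𝓝[>] a, HasDerivAt h (h' x) x ∧ h' x ≤ 0)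
    (hlim : Tendsto h (𝓝[>] a) (𝓝 L)) : ∀ᶠ x in 𝓝[>] a, h x ≤ L := by
  obtain ⟨b, hab, hb⟩ := mem_nhdsGT_iff_exists_Ioo_subset.mp hd
  have hanti : AntitoneOn h (Ioo a b) := by
    refine antitoneOn_of_hasDerivWithinAt_nonpos (f' := h') (convex_Ioo a b)
      (fun x hx ↦ (hb hx).1.continuousAt.continuousWithinAt) (fun x hx ↦ ?_) (fun x hx ↦ ?_)
    all_goals rw [interior_Ioo] at hx
    exacts [(hb hx).1.hasDerivWithinAt, (hb hx).2]
  filter_upwards [Ioo_mem_nhdsGT hab] with x hx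
  refine ge_of_tendsto hlim ?_
  filter_upwards [Ioo_mem_nhdsGT hx.1] with s hs
  exact hanti ⟨hs.1, hs.2.trans hx.2⟩ hx hs.2.le

lemma eventually_le_of_second_deriv_le {f f' f'' : ℝ → ℝ} {a A B c : ℝ}
    (hf : ∀ᶠ x in 𝓝[>] a, HasDerivAt f (f' x) x)
    (hf' : ∀ᶠ x in 𝓝[>] a, HasDerivAt f' (f'' x) x)
    (hf'' : ∀ᶠ x in 𝓝[>] a, f'' x ≤ c)
    (hB : Tendsto f (𝓝[>] a) (𝓝 B)) (hA : Tendsto f' (𝓝[>] a) (𝓝 A)) :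
    ∀ᶠ x in 𝓝[>] a, f x ≤ B + A * (x - a) + c / 2 * (x - a) ^ 2 := by
  have hlin (x : ℝ) : HasDerivAt (fun x ↦ A + c * (x - a)) c x := by
    simpa using (((hasDerivAt_id x).sub_const a).const_mul c).const_add A
  have hquad (x : ℝ) :
      HasDerivAt (fun x ↦ B + A * (x - a) + c / 2 * (x - a) ^ 2) (A + c * (x - a)) x := by
    have hsub := (hasDerivAt_id' x).sub_const a
    refine (((hsub.const_mul A).const_add B).add
      ((hsub.fun_pow 2).const_mul (c / 2))).congr_deriv ?_
    push_cast
    ring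
  have tendsto_at {P P' : ℝ → ℝ} (hP : ∀ x, HasDerivAt P (P' x) x) :
      Tendsto P (𝓝[>] a) (𝓝 (P a)) :=
    tendsto_nhdsWithin_of_tendsto_nhds (hP a).continuousAt.tendsto
  have hslope : ∀ᶠ x in 𝓝[>] a, f' x - (A + c * (x - a)) ≤ 0 := by
    refine eventually_le_of_tendsto_of_hasDerivAt_nonpos (h' := fun x ↦ f'' x - c) ?_ ?_
    · filter_upwards [hf', hf''] with x hx hxc
      exact ⟨hx.fun_sub (hlin x), sub_nonpos.mpr hxc⟩
    · simpa using hA.sub (tendsto_at hlin)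
  have hgap : ∀ᶠ x in 𝓝[>] a, f x - (B + A * (x - a) + c / 2 * (x - a) ^ 2) ≤ 0 := by
    refine eventually_le_of_tendsto_of_hasDerivAt_nonpos
      (h' := fun x ↦ f' x - (A + c * (x - a))) ?_ ?_
    · filter_upwards [hf, hslope] with x hx hxs
      exact ⟨hx.fun_sub (hquad x), hxs⟩
    · simpa using hB.sub (tendsto_at hquad)
  exact hgap.mono fun x hx ↦ sub_nonpos.mp hx

lemma ContDiff.eventually_sub_sq_le_of_isLocalMax_deriv {g : ℝ → ℝ} {a : ℝ}
    (hg : ContDiff ℝ 2 g) (hmax : IsLocalMax (deriv g) a) :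
    ∀ᶠ x in 𝓝[>] a, g a + deriv g a * (x - a) - (x - a) ^ 2 ≤ g x := by
  obtain ⟨hg₁, -, hg'⟩ := contDiff_succ_iff_deriv (n := 1).mp hg
  have hg'' : Continuous (deriv (deriv g)) := hg'.continuous_deriv le_rfl
  have hbound : ∀ᶠ x in 𝓝[>] a, -deriv (deriv g) x ≤ 2 := by
    have hzero : deriv (deriv g) a = 0 := hmax.deriv_eq_zero
    have : ∀ᶠ x in 𝓝 a, (-2 : ℝ) < deriv (deriv g) x :=
      hg''.continuousAt.eventually (lt_mem_nhds (by norm_num [hzero]))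
    exact nhdsWithin_le_nhds (this.mono fun x hx ↦ by linarith)
  have := eventually_le_of_second_deriv_le (f := -g) (f' := -deriv g)
    (Eventually.of_forall fun x ↦ (hg₁ x).hasDerivAt.neg)
    (Eventually.of_forall fun x ↦ ((hg'.differentiable one_ne_zero) x).hasDerivAt.neg) hbound
    (tendsto_nhdsWithin_of_tendsto_nhds hg.continuous.neg.continuousAt)
    (tendsto_nhdsWithin_of_tendsto_nhds hg'.continuous.neg.continuousAt)
  filter_upwards [this] with x hx
  simp only [Pi.neg_apply] at hx
  linarith

lemma ContDiff.eventually_sub_sq_le_comp_line {E : Type*} [NormedAddCommGroup E]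
    [NormedSpace ℝ E] {θ : E → ℝ} (hθ : ContDiff ℝ 2 θ) {x₀ v : E}
    (hmax : ∀ t : ℝ, fderiv ℝ θ (x₀ + t • v) v ≤ fderiv ℝ θ x₀ v) :
    ∀ᶠ t in 𝓝[>] 0, θ x₀ + fderiv ℝ θ x₀ v * t - t ^ 2 ≤ θ (x₀ + t • v) := by
  have hderiv (t : ℝ) :
      deriv (fun t : ℝ ↦ θ (x₀ + t • v)) t = fderiv ℝ θ (x₀ + t • v) v := by
    have hline : HasDerivAt (fun t : ℝ ↦ x₀ + t • v) v t := by
      simpa using ((hasDerivAt_id t).smul_const v).const_add x₀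
    exact ((hθ.differentiable (by norm_num) _).hasFDerivAt.comp_hasDerivAt t hline).deriv
  have hlocmax : IsLocalMax (deriv fun t : ℝ ↦ θ (x₀ + t • v)) 0 :=
    Eventually.of_forall fun t ↦ by simpa [hderiv] using hmax t
  have hg : ContDiff ℝ 2 fun t : ℝ ↦ θ (x₀ + t • v) := hθ.comp (by fun_prop)
  simpa [hderiv] using hg.eventually_sub_sq_le_of_isLocalMax_deriv hlocmax

lemma exists_norm_eq_one_apply_eq_norm {E : Type*} [NormedAddCommGroup E]
    [InnerProductSpace ℝ E] [CompleteSpace E] {L : E →L[ℝ] ℝ} (hL : L ≠ 0) :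
    ∃ v : E, ‖v‖ = 1 ∧ L v = ‖L‖ := by
  obtain ⟨y, rfl⟩ : ∃ y, InnerProductSpace.toDual ℝ E y = L :=
    ⟨_, LinearIsometryEquiv.apply_symm_apply _ L⟩
  have hy0 : ‖y‖ ≠ 0 := by simpa using hL
  refine ⟨‖y‖⁻¹ • y, by rw [norm_smul, norm_inv, norm_norm, inv_mul_cancel₀ hy0], ?_⟩
  rw [InnerProductSpace.toDual_apply_apply, LinearIsometryEquiv.norm_map, real_inner_smul_right,
    real_inner_self_eq_norm_mul_norm]
  field_simp

theorem stmt2_general {d : ℕ} (ω ω' ω'' : ℝ → ℝ) (ω'0 : ℝ)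
    (θ : EuclideanSpace ℝ (Fin d) → ℝ)
    (hωc : ContinuousOn ω (Set.Ici 0))
    (hω0 : ω 0 = 0)
    (hω' : ∀ ξ > (0:ℝ), HasDerivAt ω (ω' ξ) ξ)
    (hω'' : ∀ ξ > (0:ℝ), HasDerivAt ω' (ω'' ξ) ξ)
    (hω'0pos : 0 < ω'0)
    (hω'0 : Tendsto ω' (nhdsWithin 0 (Set.Ioi 0)) (nhds ω'0))
    (hω''blow : Tendsto ω'' (nhdsWithin 0 (Set.Ioi 0)) atBot)
    (hθ : ContDiff ℝ 2 θ)
    (hmod : ∀ x y : EuclideanSpace ℝ (Fin d), |θ x - θ y| ≤ ω (dist x y))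
    (x₀ : EuclideanSpace ℝ (Fin d))
    (hmax : ∀ x, ‖fderiv ℝ θ x‖ ≤ ‖fderiv ℝ θ x₀‖) :
    ∀ x, ‖fderiv ℝ θ x‖ < ω'0 := by
  intro x
  refine (hmax x).trans_lt (lt_of_not_ge fun hM ↦ ?_)
  obtain ⟨v, hv, hLv⟩ :=
    exists_norm_eq_one_apply_eq_norm (norm_pos_iff.mp (hω'0pos.trans_le hM))
  have hθline := hθ.eventually_sub_sq_le_comp_line (x₀ := x₀) (v := v) fun t ↦
    calc fderiv ℝ θ (x₀ + t • v) v ≤ ‖fderiv ℝ θ (x₀ + t • v)‖ * ‖v‖ :=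
          (Real.le_norm_self _).trans (ContinuousLinearMap.le_opNorm _ v)
      _ ≤ fderiv ℝ θ x₀ v := by rw [hv, mul_one, hLv]; exact hmax _
  have hωsq := eventually_le_of_second_deriv_le (c := -4)
    (eventually_nhdsWithin_of_forall hω') (eventually_nhdsWithin_of_forall hω'')
    (hω''blow.eventually (eventually_le_atBot _)) ((hωc 0 self_mem_Ici).mono Ioi_subset_Ici_self)
    hω'0
  obtain ⟨t, hθt, hωt, ht⟩ := (hθline.and (hωsq.and self_mem_nhdsWithin)).exists
  have hdist : dist (x₀ + t • v) x₀ = t := by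
    rw [dist_eq_norm, add_sub_cancel_left, norm_smul, hv, mul_one, Real.norm_of_nonneg ht.le]
  have hθmod := (le_abs_self _).trans (hmod (x₀ + t • v) x₀)
  rw [hdist] at hθmod
  rw [hω0, sub_zero] at hωt
  nlinarith [mul_le_mul_of_nonneg_right hM ht.le]

/-- If ω is a strong modulus of continuity (continuous on [0,∞), C² on (0,∞),
nondecreasing, concave, ω(0)=0, finite positive right derivative ω'(0) at 0,
ω''(ξ) → −∞ as ξ → 0⁺), θ ∈ C²(ℝ^d) has modulus of continuity ω, and the supremum of
|∇θ| is attained at some point, then sup |∇θ| < ω'(0). -/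
theorem stmt2 {d : ℕ} (ω ω' ω'' : ℝ → ℝ) (ω'0 : ℝ)
    (θ : EuclideanSpace ℝ (Fin d) → ℝ)
    (hωc : ContinuousOn ω (Set.Ici 0))
    (hωmono : MonotoneOn ω (Set.Ici 0))
    (hωconc : ConcaveOn ℝ (Set.Ici 0) ω)
    (hω0 : ω 0 = 0)
    (hω' : ∀ ξ > (0:ℝ), HasDerivAt ω (ω' ξ) ξ)
    (hω'' : ∀ ξ > (0:ℝ), HasDerivAt ω' (ω'' ξ) ξ)
    (hω'cont : ContinuousOn ω' (Set.Ioi 0))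
    (hω''cont : ContinuousOn ω'' (Set.Ioi 0))
    (hω'0pos : 0 < ω'0)
    (hω'0 : Tendsto ω' (nhdsWithin 0 (Set.Ioi 0)) (nhds ω'0))
    (hω''blow : Tendsto ω'' (nhdsWithin 0 (Set.Ioi 0)) atBot)
    (hθ : ContDiff ℝ 2 θ)
    (hmod : ∀ x y : EuclideanSpace ℝ (Fin d), |θ x - θ y| ≤ ω (dist x y))
    (x₀ : EuclideanSpace ℝ (Fin d))
    (hmax : ∀ x, ‖fderiv ℝ θ x‖ ≤ ‖fderiv ℝ θ x₀‖) :
    ∀ x, ‖fderiv ℝ θ x‖ < ω'0 :=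
  stmt2_general ω ω' ω'' ω'0 θ hωc hω0 hω' hω'' hω'0pos hω'0 hω''blow hθ hmod x₀ hmax
end

section
/- Suppose θ ∈ C²(ℝ^d) has modulus of continuity ω (i.e., |θ(x)−θ(y)| ≤ ω(|x−y|) for all x,y), and θ(x⁰) − θ(y⁰) = ω(ξ) where x⁰ − y⁰ = (ξ,0,…,0) with ξ > 0. Then for each coordinate direction j we have ∂_j θ(x⁰) = ∂_j θ(y⁰), and for j > 1, ∂_j θ(x⁰) = ∂_j θ(y⁰) = 0; moreover ω'(ξ⁻) ≤ ∂_1 θ(x⁰) ≤ ω'(ξ⁺). -/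
open Real Set Filter Topology

/-!
At the extremal pair the inequality `θ z - θ y⁰ ≤ ω |z - y⁰|` is an equality for `z = x⁰`, so
first-order conditions apply along lines. Translating both points by `t • v` keeps their distance
`ξ`, so `t ↦ θ (x⁰ + t v) - θ (y⁰ + t v)` is maximal at `t = 0` and the gradients agree. On the
line `y⁰ + s e₁` the distance to `y⁰` is `s`, so `θ (y⁰ + s e₁) - θ y⁰ ≤ ω s` with equality at
`s = ξ`, which squeezes `∂₁θ(x⁰)` between the one-sided derivatives of `ω`. Moving orthogonally
changes the distance only to second order, and concavity bounds `ω` by its right tangent line at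
`ξ`, so `t ↦ θ (x⁰ + t v) - ω'(ξ⁺) |x⁰ + t v - y⁰|` is maximal at `t = 0` and `∂_v θ(x⁰) = 0`.
-/

section OneSidedDerivatives

variable {f g : ℝ → ℝ} {x a b : ℝ}

theorem le_of_hasDerivWithinAt_Ioi_of_eventuallyLE (hf : HasDerivWithinAt f a (Ioi x) x)
    (hg : HasDerivWithinAt g b (Ioi x) x) (hfg : f ≤ᶠ[𝓝[>] x] g) (hx : f x = g x) : a ≤ b := by
  refine le_of_tendsto_of_tendsto ((hasDerivWithinAt_iff_tendsto_slope' self_notMem_Ioi).1 hf)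
    ((hasDerivWithinAt_iff_tendsto_slope' self_notMem_Ioi).1 hg) ?_
  filter_upwards [hfg, self_mem_nhdsWithin] with y hy (hxy : x < y)
  rw [slope_def_field, slope_def_field, hx]
  exact div_le_div_of_nonneg_right (by linarith) (sub_pos.2 hxy).le

theorem le_of_hasDerivWithinAt_Iio_of_eventuallyLE (hf : HasDerivWithinAt f a (Iio x) x)
    (hg : HasDerivWithinAt g b (Iio x) x) (hfg : f ≤ᶠ[𝓝[<] x] g) (hx : f x = g x) : b ≤ a := by
  refine le_of_tendsto_of_tendsto ((hasDerivWithinAt_iff_tendsto_slope' self_notMem_Iio).1 hg)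
    ((hasDerivWithinAt_iff_tendsto_slope' self_notMem_Iio).1 hf) ?_
  filter_upwards [hfg, self_mem_nhdsWithin] with y hy (hxy : y < x)
  rw [slope_def_field, slope_def_field, hx]
  exact div_le_div_of_nonpos_of_le (sub_neg.2 hxy).le (by linarith)

end OneSidedDerivatives

theorem ConcaveOn.le_add_mul_sub_of_hasDerivWithinAt_Ioi {S : Set ℝ} {f : ℝ → ℝ} {x y f' : ℝ}
    (hf : ConcaveOn ℝ S f) (hx : x ∈ S) (hy : y ∈ S) (hxy : x ≤ y)
    (hf' : HasDerivWithinAt f f' (Ioi x) x) : f y ≤ f x + f' * (y - x) := by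
  rcases hxy.eq_or_lt with rfl | hxy
  · simp
  have := hf.slope_le_of_hasDerivWithinAt_Ioi hx hy hxy hf'
  rw [slope_def_field, div_le_iff₀ (sub_pos.2 hxy)] at this
  linarith

theorem hasDerivAt_norm_add_smul {E : Type*} [NormedAddCommGroup E] [InnerProductSpace ℝ E]
    {w : E} (hw : w ≠ 0) (v : E) :
    HasDerivAt (fun t : ℝ => ‖w + t • v‖) (inner ℝ w v / ‖w‖) 0 := by
  have hline : HasDerivAt (fun t : ℝ => w + t • v) v 0 := by
    simpa using ((hasDerivAt_id (0 : ℝ)).smul_const v).const_add w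
  have := hline.norm_sq.sqrt (by simpa using hw)
  simp only [Real.sqrt_sq (norm_nonneg _), zero_smul, add_zero] at this
  convert this using 1
  field_simp

section Modulus

variable {E : Type*} [NormedAddCommGroup E] {θ : E → ℝ} {ω : ℝ → ℝ} {x y : E}

theorem fderiv_eq_of_modulus_attained [NormedSpace ℝ E] (hx : DifferentiableAt ℝ θ x)
    (hy : DifferentiableAt ℝ θ y) (hmod : ∀ z w, θ z - θ w ≤ ω (dist z w))
    (heq : θ x - θ y = ω (dist x y)) : fderiv ℝ θ x = fderiv ℝ θ y := by
  ext v
  have hmax : IsLocalMax (fun t : ℝ => θ (x + t • v) - θ (y + t • v)) 0 :=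
    Eventually.of_forall fun t => by simpa [heq] using hmod (x + t • v) (y + t • v)
  exact sub_eq_zero.1 <| hmax.hasDerivAt_eq_zero <|
    (hx.hasFDerivAt.hasLineDerivAt v).sub (hy.hasFDerivAt.hasLineDerivAt v)

theorem le_fderiv_apply_le_of_modulus_attained [NormedSpace ℝ E] {e : E} {ξ ωl ωr : ℝ}
    (hx : DifferentiableAt ℝ θ x) (hmod : ∀ z, θ z - θ y ≤ ω (dist z y))
    (he : ‖e‖ = 1) (hξ : 0 < ξ) (hxy : x - y = ξ • e) (heq : θ x - θ y = ω ξ)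
    (hωl : HasDerivWithinAt ω ωl (Iio ξ) ξ) (hωr : HasDerivWithinAt ω ωr (Ioi ξ) ξ) :
    ωl ≤ fderiv ℝ θ x e ∧ fderiv ℝ θ x e ≤ ωr := by
  set φ : ℝ → ℝ := fun s => θ (y + s • e) - θ y
  have hxξ : y + ξ • e = x := by rw [← hxy]; abel
  have hφ : HasDerivAt φ (fderiv ℝ θ x e) ξ := by
    have hline : HasDerivAt (fun s : ℝ => y + s • e) e ξ := by
      simpa using ((hasDerivAt_id ξ).smul_const e).const_add y
    have hθ : HasFDerivAt θ (fderiv ℝ θ x) (y + ξ • e) := hxξ ▸ hx.hasFDerivAt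
    exact (hθ.comp_hasDerivAt ξ hline).sub_const (θ y)
  have hφω : ∀ s, 0 ≤ s → φ s ≤ ω s := fun s hs => by
    simpa [φ, dist_eq_norm, norm_smul, he, abs_of_nonneg hs] using hmod (y + s • e)
  have hφξ : φ ξ = ω ξ := by simp only [φ, hxξ, heq]
  constructor
  · refine le_of_hasDerivWithinAt_Iio_of_eventuallyLE hφ.hasDerivWithinAt hωl ?_ hφξ
    filter_upwards [nhdsWithin_le_nhds (Ioi_mem_nhds hξ)] with s hs using hφω s (le_of_lt hs)
  · refine le_of_hasDerivWithinAt_Ioi_of_eventuallyLE hφ.hasDerivWithinAt hωr ?_ hφξ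
    filter_upwards [self_mem_nhdsWithin] with s (hs : ξ < s) using hφω s (hξ.trans hs).le

theorem fderiv_apply_eq_zero_of_modulus_attained [InnerProductSpace ℝ E] {v : E} {ωr : ℝ}
    (hx : DifferentiableAt ℝ θ x) (hω : ConcaveOn ℝ (Ici 0) ω)
    (hmod : ∀ z, θ z - θ y ≤ ω (dist z y)) (heq : θ x - θ y = ω (dist x y)) (hxy : x ≠ y)
    (hωr : HasDerivWithinAt ω ωr (Ioi (dist x y)) (dist x y)) (hv : inner ℝ (x - y) v = 0) :
    fderiv ℝ θ x v = 0 := by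
  set r : ℝ → ℝ := fun t => ‖x - y + t • v‖
  have hr : ∀ t, r t = dist (x + t • v) y := fun t => by
    rw [dist_eq_norm, add_sub_right_comm]
  have hr_ge : ∀ t, dist x y ≤ r t := fun t => by
    have hvt : inner ℝ (x - y) (t • v) = 0 := by rw [real_inner_smul_right, hv, mul_zero]
    have := norm_add_sq_eq_norm_sq_add_norm_sq_real hvt
    rw [dist_eq_norm]
    nlinarith [norm_nonneg (x - y), norm_nonneg (x - y + t • v), sq_nonneg ‖t • v‖]
  have hmax : IsLocalMax (fun t => θ (x + t • v) - ωr * r t) 0 := by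
    refine Eventually.of_forall fun t => ?_
    have htan : ω (r t) ≤ ω (dist x y) + ωr * (r t - dist x y) :=
      hω.le_add_mul_sub_of_hasDerivWithinAt_Ioi dist_nonneg (dist_nonneg.trans (hr_ge t))
        (hr_ge t) hωr
    have hθ : θ (x + t • v) - θ y ≤ ω (r t) := hr t ▸ hmod _
    have hr0 : r 0 = dist x y := by simp [r, dist_eq_norm]
    simp only [zero_smul, add_zero, hr0]
    linarith
  have hderiv := (hx.hasFDerivAt.hasLineDerivAt v).sub
    ((hasDerivAt_norm_add_smul (sub_ne_zero.2 hxy) v).const_mul ωr)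
  simpa [hv] using hmax.hasDerivAt_eq_zero hderiv

end Modulus

theorem stmt4_general {d : ℕ} [NeZero d] (ω : ℝ → ℝ) (θ : EuclideanSpace ℝ (Fin d) → ℝ)
    (hωconc : ConcaveOn ℝ (Set.Ici 0) ω)
    (hθ : ContDiff ℝ 2 θ)
    (hmod : ∀ x y : EuclideanSpace ℝ (Fin d), |θ x - θ y| ≤ ω (dist x y))
    (x₀ y₀ : EuclideanSpace ℝ (Fin d)) (ξ : ℝ) (hξ : 0 < ξ)
    (hxy : x₀ - y₀ = EuclideanSpace.single (0 : Fin d) ξ)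
    (heq : θ x₀ - θ y₀ = ω ξ)
    (ωl ωr : ℝ)
    (hωl : HasDerivWithinAt ω ωl (Set.Iio ξ) ξ)
    (hωr : HasDerivWithinAt ω ωr (Set.Ioi ξ) ξ) :
    (∀ j : Fin d, fderiv ℝ θ x₀ (EuclideanSpace.single j 1)
        = fderiv ℝ θ y₀ (EuclideanSpace.single j 1)) ∧
    (∀ j : Fin d, j ≠ 0 → fderiv ℝ θ x₀ (EuclideanSpace.single j 1) = 0) ∧
    ωl ≤ fderiv ℝ θ x₀ (EuclideanSpace.single (0 : Fin d) 1) ∧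
    fderiv ℝ θ x₀ (EuclideanSpace.single (0 : Fin d) 1) ≤ ωr := by
  have hdiff : Differentiable ℝ θ := hθ.differentiable (by norm_num)
  have hmod' : ∀ z w, θ z - θ w ≤ ω (dist z w) := fun z w => (le_abs_self _).trans (hmod z w)
  set e : Fin d → EuclideanSpace ℝ (Fin d) := fun j => EuclideanSpace.single j 1
  have he : Orthonormal ℝ e := EuclideanSpace.orthonormal_single
  have hxy' : x₀ - y₀ = ξ • e 0 := by
    rw [hxy]; ext i; simp [e]
  have hdist : dist x₀ y₀ = ξ := by
    rw [dist_eq_norm, hxy', norm_smul, he.1, mul_one, norm_of_nonneg hξ.le]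
  refine ⟨fun j => ?_, fun j hj => ?_, le_fderiv_apply_le_of_modulus_attained (hdiff x₀)
    (hmod' · y₀) (he.1 0) hξ hxy' heq hωl hωr⟩
  · rw [fderiv_eq_of_modulus_attained (hdiff x₀) (hdiff y₀) hmod' (hdist ▸ heq)]
  · refine fderiv_apply_eq_zero_of_modulus_attained (hdiff x₀) hωconc (hmod' · y₀)
      (hdist ▸ heq) (dist_ne_zero.1 (hdist ▸ hξ.ne')) (hdist ▸ hωr) ?_
    rw [hxy', real_inner_smul_left, he.2 hj.symm, mul_zero]

/-- If θ ∈ C²(ℝ^d) has modulus of continuity ω and the modulus is attained,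
θ(x⁰) − θ(y⁰) = ω(ξ) with x⁰ − y⁰ = ξ e₁, ξ > 0, then all partial derivatives of θ agree
at x⁰ and y⁰, those in directions j ≠ 1 vanish, and ω'(ξ⁻) ≤ ∂₁θ(x⁰) ≤ ω'(ξ⁺). -/
theorem stmt4 {d : ℕ} [NeZero d] (ω : ℝ → ℝ) (θ : EuclideanSpace ℝ (Fin d) → ℝ)
    (hωc : ContinuousOn ω (Set.Ici 0))
    (hωmono : MonotoneOn ω (Set.Ici 0))
    (hωconc : ConcaveOn ℝ (Set.Ici 0) ω)
    (hω0 : ω 0 = 0)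
    (hθ : ContDiff ℝ 2 θ)
    (hmod : ∀ x y : EuclideanSpace ℝ (Fin d), |θ x - θ y| ≤ ω (dist x y))
    (x₀ y₀ : EuclideanSpace ℝ (Fin d)) (ξ : ℝ) (hξ : 0 < ξ)
    (hxy : x₀ - y₀ = EuclideanSpace.single (0 : Fin d) ξ)
    (heq : θ x₀ - θ y₀ = ω ξ)
    (ωl ωr : ℝ)
    (hωl : HasDerivWithinAt ω ωl (Set.Iio ξ) ξ)
    (hωr : HasDerivWithinAt ω ωr (Set.Ioi ξ) ξ) :
    (∀ j : Fin d, fderiv ℝ θ x₀ (EuclideanSpace.single j 1)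
        = fderiv ℝ θ y₀ (EuclideanSpace.single j 1)) ∧
    (∀ j : Fin d, j ≠ 0 → fderiv ℝ θ x₀ (EuclideanSpace.single j 1) = 0) ∧
    ωl ≤ fderiv ℝ θ x₀ (EuclideanSpace.single (0 : Fin d) 1) ∧
    fderiv ℝ θ x₀ (EuclideanSpace.single (0 : Fin d) 1) ≤ ωr :=
  stmt4_general ω θ hωconc hθ hmod x₀ y₀ ξ hξ hxy heq ωl ωr hωl hωr
end

section
/- Under the hypotheses of the previous lemma (θ ∈ C² with modulus of continuity ω, equality θ(x⁰) − θ(y⁰) = ω(ξ) at x⁰ − y⁰ = ξ e₁, ξ > 0, ω C² near ξ), one has Δθ(x⁰) − Δθ(y⁰) ≤ 4 ω''(ξ⁻). -/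
open Filter Topology

/-! Along a pair of lines `t ↦ (x₀ + t • v, y₀ + t • w)` the function
`θ (x₀ + t • v) - θ (y₀ + t • w) - ω (dist (x₀ + t • v) (y₀ + t • w))` is `≤ 0` and vanishes at
`t = 0`, so its second derivative at `0` is `≤ 0`. Translating both points along `eⱼ`, `j ≠ 0`,
keeps their distance `ξ`, which gives `∂ⱼ²θ(x₀) - ∂ⱼ²θ(y₀) ≤ 0`; moving them apart along `± e₁`
changes the distance to `ξ + 2t`, which gives `∂₁²θ(x₀) - ∂₁²θ(y₀) ≤ 4 ω''(ξ)`. Summing over `j`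
gives the claim. -/

theorem IsLocalMax.deriv_deriv_nonpos {f : ℝ → ℝ} {x₀ : ℝ} (hmax : IsLocalMax f x₀)
    (hc : ContinuousAt f x₀) : deriv (deriv f) x₀ ≤ 0 := by
  by_contra! hpos
  have hmin := isLocalMin_of_deriv_deriv_pos hpos hmax.deriv_eq_zero hc
  have hconst : f =ᶠ[𝓝 x₀] fun _ => f x₀ :=
    (hmax.and hmin).mono fun x hx => le_antisymm hx.1 hx.2
  have hderiv : deriv f =ᶠ[𝓝 x₀] fun _ => 0 := by
    filter_upwards [hconst.eventuallyEq_nhds] with x hx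
    rw [hx.deriv_eq, deriv_const]
  rw [hderiv.deriv_eq, deriv_const] at hpos
  exact hpos.false

theorem IsLocalMax.le_zero_of_hasDerivAt {f f' : ℝ → ℝ} {x₀ c : ℝ} (hmax : IsLocalMax f x₀)
    (hf : ∀ᶠ x in 𝓝 x₀, HasDerivAt f (f' x) x) (hf' : HasDerivAt f' c x₀) : c ≤ 0 := by
  have hderiv : deriv f =ᶠ[𝓝 x₀] f' := hf.mono fun x hx => hx.deriv
  simpa [hderiv.deriv_eq, hf'.deriv] using
    hmax.deriv_deriv_nonpos hf.self_of_nhds.continuousAt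

section

variable {E : Type*} [NormedAddCommGroup E] [NormedSpace ℝ E] {θ : E → ℝ}

theorem hasDerivAt_comp_add_smul (hθ : Differentiable ℝ θ) (x v : E) (t : ℝ) :
    HasDerivAt (fun s : ℝ => θ (x + s • v)) (fderiv ℝ θ (x + t • v) v) t := by
  have hline : HasDerivAt (fun s : ℝ => x + s • v) v t := by
    simpa using ((hasDerivAt_id t).smul_const v).const_add x
  exact (hθ _).hasFDerivAt.comp_hasDerivAt t hline

theorem differentiable_fderiv_apply (hθ : ContDiff ℝ 2 θ) (v : E) :
    Differentiable ℝ fun z => fderiv ℝ θ z v :=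
  ((hθ.fderiv_right (m := 1) le_rfl).differentiable one_ne_zero).clm_apply
    (differentiable_const v)

theorem fderiv_fderiv_apply_neg (y v : E) :
    fderiv ℝ (fun z => fderiv ℝ θ z (-v)) y (-v) = fderiv ℝ (fun z => fderiv ℝ θ z v) y v := by
  simp [fderiv_fun_neg]

theorem fderiv_fderiv_sub_le_of_touches (hθ : ContDiff ℝ 2 θ) {x y v w : E} {φ φ' : ℝ → ℝ}
    {c : ℝ} (hle : ∀ᶠ t in 𝓝 0, θ (x + t • v) - θ (y + t • w) ≤ φ t)
    (heq : θ x - θ y = φ 0) (hφ : ∀ᶠ t in 𝓝 0, HasDerivAt φ (φ' t) t)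
    (hφ' : HasDerivAt φ' c 0) :
    fderiv ℝ (fun z => fderiv ℝ θ z v) x v - fderiv ℝ (fun z => fderiv ℝ θ z w) y w ≤ c := by
  have hθ1 : Differentiable ℝ θ := hθ.differentiable two_ne_zero
  have hmax : IsLocalMax (fun t : ℝ => θ (x + t • v) - θ (y + t • w) - φ t) 0 := by
    filter_upwards [hle] with t ht
    simp only [zero_smul, add_zero, heq, sub_self]
    linarith
  have hderiv : ∀ᶠ t in 𝓝 0, HasDerivAt (fun t : ℝ => θ (x + t • v) - θ (y + t • w) - φ t)
      (fderiv ℝ θ (x + t • v) v - fderiv ℝ θ (y + t • w) w - φ' t) t :=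
    hφ.mono fun t ht =>
      ((hasDerivAt_comp_add_smul hθ1 x v t).sub (hasDerivAt_comp_add_smul hθ1 y w t)).sub ht
  have hderiv2 := ((hasDerivAt_comp_add_smul (differentiable_fderiv_apply hθ v) x v 0).sub
    (hasDerivAt_comp_add_smul (differentiable_fderiv_apply hθ w) y w 0)).sub hφ'
  simp only [zero_smul, add_zero] at hderiv2
  linarith [hmax.le_zero_of_hasDerivAt hderiv hderiv2]

variable {ω : ℝ → ℝ} (hθ : ContDiff ℝ 2 θ) (hmod : ∀ x y, |θ x - θ y| ≤ ω (dist x y))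
include hθ hmod

theorem fderiv_fderiv_sub_le_zero_of_modulus_eq {x y : E} (heq : θ x - θ y = ω (dist x y))
    (v : E) :
    fderiv ℝ (fun z => fderiv ℝ θ z v) x v - fderiv ℝ (fun z => fderiv ℝ θ z v) y v ≤ 0 := by
  refine fderiv_fderiv_sub_le_of_touches hθ (φ := fun _ => ω (dist x y)) (φ' := fun _ => 0)
    (Eventually.of_forall fun t => ?_) heq (Eventually.of_forall fun t => hasDerivAt_const t _)
    (hasDerivAt_const 0 0)
  calc θ (x + t • v) - θ (y + t • v) ≤ |θ (x + t • v) - θ (y + t • v)| := le_abs_self _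
    _ ≤ ω (dist (x + t • v) (y + t • v)) := hmod _ _
    _ = ω (dist x y) := by rw [dist_add_right]

theorem fderiv_fderiv_sub_le_of_modulus_eq {ω' ω'' : ℝ → ℝ} {x y u : E} {ξ : ℝ} (hξ : 0 < ξ)
    (hu : ‖u‖ = 1) (hxy : x - y = ξ • u) (heq : θ x - θ y = ω ξ)
    (hω' : ∀ᶠ η in 𝓝 ξ, HasDerivAt ω (ω' η) η) (hω'' : HasDerivAt ω' (ω'' ξ) ξ) :
    fderiv ℝ (fun z => fderiv ℝ θ z u) x u - fderiv ℝ (fun z => fderiv ℝ θ z u) y u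
      ≤ 4 * ω'' ξ := by
  have hline : ∀ t : ℝ, HasDerivAt (fun s : ℝ => ξ + 2 * s) 2 t := fun t => by
    simpa using ((hasDerivAt_id t).const_mul 2).const_add ξ
  have hnear : Tendsto (fun s : ℝ => ξ + 2 * s) (𝓝 0) (𝓝 ξ) := by
    simpa using (hline 0).continuousAt.tendsto
  have hle : ∀ᶠ t in 𝓝 0, θ (x + t • u) - θ (y + t • -u) ≤ ω (ξ + 2 * t) := by
    filter_upwards [hnear.eventually (eventually_gt_nhds hξ)] with t ht
    have hdist : dist (x + t • u) (y + t • -u) = ξ + 2 * t := by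
      rw [dist_eq_norm, show x + t • u - (y + t • -u) = (ξ + 2 * t) • u by
        rw [add_smul, ← hxy]; module, norm_smul, hu, mul_one, Real.norm_of_nonneg ht.le]
    calc θ (x + t • u) - θ (y + t • -u) ≤ |θ (x + t • u) - θ (y + t • -u)| := le_abs_self _
      _ ≤ ω (dist (x + t • u) (y + t • -u)) := hmod _ _
      _ = ω (ξ + 2 * t) := by rw [hdist]
  have hderiv := hnear.eventually (hω'.eventually_nhds)
  have key := fderiv_fderiv_sub_le_of_touches hθ (v := u) (w := -u)
    (φ := fun t => ω (ξ + 2 * t)) (φ' := fun t => ω' (ξ + 2 * t) * 2) (c := ω'' ξ * 2 * 2)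
    hle (by simpa using heq) (hderiv.mono fun t ht => ?_) ?_
  · rw [fderiv_fderiv_apply_neg] at key
    linarith
  · exact ht.self_of_nhds.comp t (hline t)
  · simpa using (hω''.comp_of_eq 0 (hline 0) (by ring)).mul_const 2

end

theorem stmt5_general {d : ℕ} [NeZero d] (ω ω' ω'' : ℝ → ℝ)
    (θ : EuclideanSpace ℝ (Fin d) → ℝ)
    (hθ : ContDiff ℝ 2 θ)
    (hmod : ∀ x y : EuclideanSpace ℝ (Fin d), |θ x - θ y| ≤ ω (dist x y))
    (x₀ y₀ : EuclideanSpace ℝ (Fin d)) (ξ : ℝ) (hξ : 0 < ξ)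
    (hxy : x₀ - y₀ = EuclideanSpace.single (0 : Fin d) ξ)
    (heq : θ x₀ - θ y₀ = ω ξ)
    -- ω is C² in a neighborhood (a,b) of ξ, with first and second derivatives ω', ω'':
    (a b : ℝ) (ha : a < ξ) (hb : ξ < b)
    (hω' : ∀ η ∈ Set.Ioo a b, HasDerivAt ω (ω' η) η)
    (hω'' : ∀ η ∈ Set.Ioo a b, HasDerivAt ω' (ω'' η) η) :
    (∑ j : Fin d, fderiv ℝ (fun z => fderiv ℝ θ z (EuclideanSpace.single j 1)) x₀
        (EuclideanSpace.single j 1)) -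
    (∑ j : Fin d, fderiv ℝ (fun z => fderiv ℝ θ z (EuclideanSpace.single j 1)) y₀
        (EuclideanSpace.single j 1)) ≤ 4 * ω'' ξ := by
  have hxy' : x₀ - y₀ = ξ • EuclideanSpace.single (0 : Fin d) 1 := by
    rw [hxy]
    ext i
    simp [PiLp.single_apply]
  have hdist : dist x₀ y₀ = ξ := by
    simp [dist_eq_norm, hxy, hξ.le]
  have hfirst := fderiv_fderiv_sub_le_of_modulus_eq hθ hmod hξ (by simp) hxy' heq
    (eventually_of_mem (Ioo_mem_nhds ha hb) hω') (hω'' ξ ⟨ha, hb⟩)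
  have hrest : ∑ j ∈ {0}ᶜ,
      (fderiv ℝ (fun z => fderiv ℝ θ z (EuclideanSpace.single j 1)) x₀ (EuclideanSpace.single j 1)
      - fderiv ℝ (fun z => fderiv ℝ θ z (EuclideanSpace.single j 1)) y₀
        (EuclideanSpace.single j 1)) ≤ 0 :=
    Finset.sum_nonpos fun j _ =>
      fderiv_fderiv_sub_le_zero_of_modulus_eq hθ hmod (hdist ▸ heq) _
  rw [← Finset.sum_sub_distrib, Fintype.sum_eq_add_sum_compl 0]
  linarith

/-- Under the hypotheses of the previous lemma (θ ∈ C² with modulus of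
continuity ω, equality θ(x⁰) − θ(y⁰) = ω(ξ) at x⁰ − y⁰ = ξ e₁, ξ > 0, ω C² near ξ),
one has Δθ(x⁰) − Δθ(y⁰) ≤ 4 ω''(ξ⁻). -/
theorem stmt5 {d : ℕ} [NeZero d] (ω ω' ω'' : ℝ → ℝ)
    (θ : EuclideanSpace ℝ (Fin d) → ℝ)
    (hωc : ContinuousOn ω (Set.Ici 0))
    (hωmono : MonotoneOn ω (Set.Ici 0))
    (hωconc : ConcaveOn ℝ (Set.Ici 0) ω)
    (hω0 : ω 0 = 0)
    (hθ : ContDiff ℝ 2 θ)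
    (hmod : ∀ x y : EuclideanSpace ℝ (Fin d), |θ x - θ y| ≤ ω (dist x y))
    (x₀ y₀ : EuclideanSpace ℝ (Fin d)) (ξ : ℝ) (hξ : 0 < ξ)
    (hxy : x₀ - y₀ = EuclideanSpace.single (0 : Fin d) ξ)
    (heq : θ x₀ - θ y₀ = ω ξ)
    -- ω is C² in a neighborhood (a,b) of ξ, with first and second derivatives ω', ω'':
    (a b : ℝ) (ha : a < ξ) (hb : ξ < b) (ha0 : 0 < a)
    (hω' : ∀ η ∈ Set.Ioo a b, HasDerivAt ω (ω' η) η)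
    (hω'' : ∀ η ∈ Set.Ioo a b, HasDerivAt ω' (ω'' η) η)
    (hω''cont : ContinuousOn ω'' (Set.Ioo a b)) :
    (∑ j : Fin d, fderiv ℝ (fun z => fderiv ℝ θ z (EuclideanSpace.single j 1)) x₀
        (EuclideanSpace.single j 1)) -
    (∑ j : Fin d, fderiv ℝ (fun z => fderiv ℝ θ z (EuclideanSpace.single j 1)) y₀
        (EuclideanSpace.single j 1)) ≤ 4 * ω'' ξ :=
  stmt5_general ω ω' ω'' θ hθ hmod x₀ y₀ ξ hξ hxy heq a b ha hb hω' hω''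
end
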